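/- Let r ≥ 2 and m ≥ 1 be integers and let C be the binary code of length (r+1)^m defined by the parity-check matrix H. Then C has locality r and availability m: for every α ∈ Z_{r+1}^m, the m sets R_i = L^{(i)}_α \ {α} (i = 1,…,m) are pairwise disjoint, each has exactly r elements, and each is a repair set of α, i.e., x_α = ∑_{β ∈ R_i} x_β for every codeword x ∈ C and every i ∈ {1,…,m}. -/

import Mathlib

/-- `Z_r^m ⊆ Z_{r+1}^m`: the tuples all of whose entries are `< r`;
`Lset r m α` is the set `L(α) = {μ ∈ Z_r^m : μ_j = α_j for all j ∈ T(α)}`,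
where `T(α) = {j : α_j ≤ r-1}`. -/
def Lset (r m : ℕ) (α : Fin m → Fin (r + 1)) : Finset (Fin m → Fin (r + 1)) :=
  Finset.univ.filter fun μ =>
    (∀ j, (μ j : ℕ) < r) ∧ ∀ j, (α j : ℕ) < r → μ j = α j

/-- The binary code `C` with parity-check matrix `H`: all vectors
`x ∈ F_2^{Z_{r+1}^m}` with `x_α = ∑_{β ∈ L(α)} x_β` for every
`α ∈ Z_{r+1}^m \ Z_r^m`. -/
def codeC (r m : ℕ) : Set ((Fin m → Fin (r + 1)) → ZMod 2) :=
  {x | ∀ α : Fin m → Fin (r + 1), ¬(∀ j, (α j : ℕ) < r) →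
    x α = ∑ β ∈ Lset r m α, x β}

/-- `lineSet r m i α` is the axis-parallel line `L^{(i)}_α` through `α` in
direction `i`. -/
def lineSet (r m : ℕ) (i : Fin m) (α : Fin m → Fin (r + 1)) :
    Finset (Fin m → Fin (r + 1)) :=
  Finset.univ.filter fun μ => ∀ j, j ≠ i → μ j = α j

/-!
Every axis-parallel line of `Z_{r+1}^m` has even weight in a codeword, which is exactly the repair
equation for each of its points. The check `x_α = ∑_{β ∈ L(α)} x_β` holds at every `α`, trivially
on `Z_r^m` where `L(α) = {α}`. Write the line through `α` in direction `i` as the points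
`α[i ↦ c]`, `c ∈ Z_{r+1}`. For `c < r` the set `L(α[i ↦ c])` is the fibre over `c` of the
coordinate map `μ ↦ μ_i` on `L(α[i ↦ r])`, so the checks at the points with `c < r` add up to the
check at `α[i ↦ r]`, and the line sum is twice `∑_{β ∈ L(α[i ↦ r])} x_β`.
-/

open Finset Function

@[simp]
lemma mem_Lset {r m : ℕ} {α μ : Fin m → Fin (r + 1)} :
    μ ∈ Lset r m α ↔ (∀ j, (μ j : ℕ) < r) ∧ ∀ j, (α j : ℕ) < r → μ j = α j := by
  simp [Lset]

@[simp]
lemma mem_lineSet {r m : ℕ} {i : Fin m} {α μ : Fin m → Fin (r + 1)} :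
    μ ∈ lineSet r m i α ↔ ∀ j, j ≠ i → μ j = α j := by
  simp [lineSet]

lemma Lset_eq_singleton {r m : ℕ} {α : Fin m → Fin (r + 1)} (h : ∀ j, (α j : ℕ) < r) :
    Lset r m α = {α} := by
  ext μ
  simp only [mem_Lset, mem_singleton]
  exact ⟨fun ⟨_, hμ⟩ => funext fun j => hμ j (h j), by rintro rfl; exact ⟨h, fun _ _ => rfl⟩⟩

lemma eq_sum_Lset_of_mem_codeC {r m : ℕ} {x : (Fin m → Fin (r + 1)) → ZMod 2}
    (hx : x ∈ codeC r m) (α : Fin m → Fin (r + 1)) :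
    x α = ∑ β ∈ Lset r m α, x β := by
  by_cases h : ∀ j, (α j : ℕ) < r
  · rw [Lset_eq_singleton h, sum_singleton]
  · exact hx α h

lemma lineSet_eq_map (r m : ℕ) (i : Fin m) (α : Fin m → Fin (r + 1)) :
    lineSet r m i α = univ.map ⟨update α i, update_injective α i⟩ := by
  ext μ
  simp only [mem_lineSet, mem_map, mem_univ, true_and, Embedding.coeFn_mk]
  refine ⟨fun h => ⟨μ i, ?_⟩, ?_⟩
  · rw [update_eq_iff]
    exact ⟨rfl, fun j hj => (h j hj).symm⟩
  · rintro ⟨c, rfl⟩ j hj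
    exact update_of_ne hj c α

lemma self_mem_lineSet (r m : ℕ) (i : Fin m) (α : Fin m → Fin (r + 1)) :
    α ∈ lineSet r m i α :=
  mem_lineSet.2 fun _ _ => rfl

lemma card_lineSet (r m : ℕ) (i : Fin m) (α : Fin m → Fin (r + 1)) :
    (lineSet r m i α).card = r + 1 := by
  rw [lineSet_eq_map, card_map, card_univ, Fintype.card_fin]

lemma disjoint_erase_lineSet {r m : ℕ} {i j : Fin m} (hij : i ≠ j) (α : Fin m → Fin (r + 1)) :
    Disjoint ((lineSet r m i α).erase α) ((lineSet r m j α).erase α) := by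
  refine disjoint_left.2 fun μ hμi hμj => (mem_erase.1 hμi).1 (funext fun k => ?_)
  obtain ⟨-, hi⟩ := mem_erase.1 hμi
  obtain ⟨-, hj⟩ := mem_erase.1 hμj
  by_cases hk : k = i
  · exact mem_lineSet.1 hj k (hk ▸ hij)
  · exact mem_lineSet.1 hi k hk

lemma Lset_update_eq_filter {r m : ℕ} (α : Fin m → Fin (r + 1)) (i : Fin m) {c : Fin (r + 1)}
    (hc : (c : ℕ) < r) :
    Lset r m (update α i c) = (Lset r m (update α i (Fin.last r))).filter (· i = c) := by
  ext μ
  simp only [mem_filter, mem_Lset]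
  constructor
  · rintro ⟨hμ, hfix⟩
    refine ⟨⟨hμ, fun j hj => ?_⟩, by simpa using hfix i (by simpa using hc)⟩
    obtain rfl | hji := eq_or_ne j i
    · simp at hj
    · simpa [hji] using hfix j (by simpa [hji] using hj)
  · rintro ⟨⟨hμ, hfix⟩, rfl⟩
    refine ⟨hμ, fun j hj => ?_⟩
    obtain rfl | hji := eq_or_ne j i
    · simp
    · simpa [hji] using hfix j (by simpa [hji] using hj)

lemma sum_lineSet_eq_zero {r m : ℕ} {x : (Fin m → Fin (r + 1)) → ZMod 2}
    (hx : x ∈ codeC r m) (i : Fin m) (α : Fin m → Fin (r + 1)) :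
    ∑ β ∈ lineSet r m i α, x β = 0 := by
  set top := Lset r m (update α i (Fin.last r))
  have hfibre : ∀ μ ∈ top, μ i ∈ univ.erase (Fin.last r) := fun μ hμ =>
    mem_erase.2 ⟨Fin.ne_of_lt ((mem_Lset.1 hμ).1 i), mem_univ _⟩
  calc ∑ β ∈ lineSet r m i α, x β
      = ∑ c ∈ univ.erase (Fin.last r), x (update α i c) + x (update α i (Fin.last r)) := by
        rw [lineSet_eq_map, sum_map, sum_erase_add _ _ (mem_univ _)]
        rfl
    _ = ∑ c ∈ univ.erase (Fin.last r), ∑ μ ∈ top with μ i = c, x μ + ∑ μ ∈ top, x μ := by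
        congr 1
        · refine sum_congr rfl fun c hc => ?_
          rw [eq_sum_Lset_of_mem_codeC hx,
            Lset_update_eq_filter α i (Fin.val_lt_last (ne_of_mem_erase hc))]
        · exact eq_sum_Lset_of_mem_codeC hx _
    _ = ∑ μ ∈ top, x μ + ∑ μ ∈ top, x μ := by rw [sum_fiberwise_of_maps_to hfibre]
    _ = 0 := CharTwo.add_self_eq_zero _

theorem codeC_locality_availability_general (r m : ℕ)
    (α : Fin m → Fin (r + 1)) :
    (∀ i j : Fin m, i ≠ j →
      Disjoint ((lineSet r m i α).erase α) ((lineSet r m j α).erase α)) ∧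
    (∀ i : Fin m, ((lineSet r m i α).erase α).card = r) ∧
    (∀ i : Fin m, ∀ x ∈ codeC r m,
      x α = ∑ β ∈ (lineSet r m i α).erase α, x β) := by
  refine ⟨fun i j hij => disjoint_erase_lineSet hij α, fun i => ?_, fun i x hx => ?_⟩
  · rw [card_erase_of_mem (self_mem_lineSet r m i α), card_lineSet, Nat.add_sub_cancel]
  · have hline := sum_lineSet_eq_zero hx i α
    rwa [← add_sum_erase _ _ (self_mem_lineSet r m i α), CharTwo.add_eq_zero] at hline

/-- `C` has locality `r` and availability `m`: for every coordinate `α`, the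
`m` punctured lines `R_i = L^{(i)}_α \ {α}` are pairwise disjoint, each has
exactly `r` elements, and each is a repair set of `α`. -/
theorem codeC_locality_availability (r m : ℕ) (hr : 2 ≤ r) (hm : 1 ≤ m)
    (α : Fin m → Fin (r + 1)) :
    (∀ i j : Fin m, i ≠ j →
      Disjoint ((lineSet r m i α).erase α) ((lineSet r m j α).erase α)) ∧
    (∀ i : Fin m, ((lineSet r m i α).erase α).card = r) ∧
    (∀ i : Fin m, ∀ x ∈ codeC r m,
      x α = ∑ β ∈ (lineSet r m i α).erase α, x β) :=
  codeC_locality_availability_general r m α
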